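/- arXiv:1001.3195 — 6 statements merged into one kernel-verified Lean document; each statement's English description precedes it below -/
import Mathlib

section
/- Let Δ be a simplicial complex on [m] with underlying graph G = G(Δ). Then the image of the parametrization φ_Δ is a closed subset of the cone S⪰0^m(G) of positive semidefinite m×m matrices whose (i,j) entry is zero whenever i ≠ j and {i,j} is not an edge of G. -/
open Matrix

/-- `Δ` is a simplicial complex with ground set all of `V`: it is closed under
taking subsets and every vertex lies in some face. -/
def IsSimplicialComplex {V : Type*} [Fintype V] [DecidableEq V]
    (Δ : Finset (Finset V)) : Prop :=
  (∀ F ∈ Δ, ∀ F', F' ⊆ F → F' ∈ Δ) ∧ ∀ i : V, ∃ F ∈ Δ, i ∈ F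

/-- The parametrization `φ_Δ`, sending `γ = (γ_{i,F})` to the matrix with entries
`φ_Δ(γ)_{ij} = ∑_{F ∈ Δ : i,j ∈ F} γ_{i,F} γ_{j,F}`. -/
def phi {V : Type*} [Fintype V] [DecidableEq V] (Δ : Finset (Finset V))
    (γ : Finset V → V → ℝ) : Matrix V V ℝ :=
  Matrix.of fun i j => ∑ F ∈ Δ, if i ∈ F ∧ j ∈ F then γ F i * γ F j else 0

/-- The image of the parametrization `φ_Δ`. -/
def phiImage {V : Type*} [Fintype V] [DecidableEq V] (Δ : Finset (Finset V)) :
    Set (Matrix V V ℝ) :=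
  Set.range (phi Δ)

/-- The underlying graph `G(Δ)`: its edges are the 2-element faces of `Δ`. -/
def underlyingGraph {V : Type*} [Fintype V] [DecidableEq V]
    (Δ : Finset (Finset V)) : SimpleGraph V where
  Adj i j := i ≠ j ∧ ({i, j} : Finset V) ∈ Δ
  symm := ⟨fun i j h => ⟨h.1.symm, by rw [Finset.pair_comm]; exact h.2⟩⟩
  loopless := ⟨fun i h => h.1 rfl⟩

/-- The cone `S⪰0^m(G)` of positive semidefinite matrices with zeros at the
non-edges of `G`. -/
def psdCone {V : Type*} [Fintype V] (G : SimpleGraph V) :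
    Set (Matrix V V ℝ) :=
  {S | S.PosSemidef ∧ ∀ i j, i ≠ j → ¬ G.Adj i j → S i j = 0}

/-! `φ_Δ(γ) = Γ(γ) Γ(γ)ᵀ` is positive semidefinite, and its `(i, j)` entry is a sum over the
faces containing `{i, j}`, of which there are none when `{i, j} ∉ Δ` since `Δ` is closed under
subsets. For closedness, only the coordinates `γ_{i,F}` with `F ∈ Δ`, `i ∈ F` matter, and each
satisfies `γ_{i,F}² ≤ φ_Δ(γ)_{ii}`. Hence near any matrix `S` the image of `φ_Δ` is covered by
the image of a compact box, which is closed. -/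

theorem isClosed_range_of_forall_nhds_subset_image_compact {X Y : Type*}
    [TopologicalSpace X] [TopologicalSpace Y] [T2Space Y] {f : X → Y} (hf : Continuous f)
    (h : ∀ y, ∃ U ∈ nhds y, ∃ K, IsCompact K ∧ Set.range f ∩ U ⊆ f '' K) :
    IsClosed (Set.range f) := by
  refine isClosed_of_closure_subset fun y hy => ?_
  obtain ⟨U, hU, K, hK, hcover⟩ := h y
  have hyK : y ∈ closure (f '' K) := mem_closure_iff_nhds.2 fun t ht =>
    (mem_closure_iff_nhds.1 hy (t ∩ U) (Filter.inter_mem ht hU)).mono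
      fun z hz => ⟨hz.1.1, hcover ⟨hz.2, hz.1.2⟩⟩
  exact Set.image_subset_range f K ((hK.image hf).isClosed.closure_subset hyK)

section

variable {V : Type*} [Fintype V] [DecidableEq V] (Δ : Finset (Finset V))

def faceMatrix (γ : Finset V → V → ℝ) : Matrix V Δ ℝ :=
  Matrix.of fun i F => if i ∈ F.1 then γ F i else 0

theorem phi_eq_faceMatrix_mul_transpose (γ : Finset V → V → ℝ) :
    phi Δ γ = faceMatrix Δ γ * (faceMatrix Δ γ)ᵀ := by
  ext i j
  simp only [phi, faceMatrix, Matrix.of_apply, Matrix.mul_apply, Matrix.transpose_apply]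
  rw [← Finset.sum_coe_sort Δ]
  refine Finset.sum_congr rfl fun F _ => ?_
  by_cases hi : i ∈ F.1 <;> by_cases hj : j ∈ F.1 <;> simp [hi, hj]

theorem posSemidef_phi (γ : Finset V → V → ℝ) : (phi Δ γ).PosSemidef := by
  rw [phi_eq_faceMatrix_mul_transpose]
  exact Matrix.posSemidef_self_mul_conjTranspose _

theorem phi_apply_eq_zero {i j : V} (hΔ : ∀ F ∈ Δ, ∀ F', F' ⊆ F → F' ∈ Δ)
    (hij : ({i, j} : Finset V) ∉ Δ) (γ : Finset V → V → ℝ) : phi Δ γ i j = 0 :=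
  Finset.sum_eq_zero fun F hF => if_neg fun ⟨hi, hj⟩ =>
    hij (hΔ F hF _ (Finset.insert_subset hi (Finset.singleton_subset_iff.2 hj)))

theorem continuous_phi : Continuous (phi Δ) := by
  refine continuous_pi fun i => continuous_pi fun j => continuous_finsetSum _ fun F _ => ?_
  exact .if_const _ (by fun_prop) continuous_const

def restrictToFaces (γ : Finset V → V → ℝ) : Finset V → V → ℝ :=
  fun F i => if F ∈ Δ ∧ i ∈ F then γ F i else 0

theorem phi_restrictToFaces (γ : Finset V → V → ℝ) :
    phi Δ (restrictToFaces Δ γ) = phi Δ γ := by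
  ext i j
  refine Finset.sum_congr rfl fun F hF => ?_
  by_cases h : i ∈ F ∧ j ∈ F <;> simp [restrictToFaces, h, hF]

theorem sq_le_phi_apply_self {γ : Finset V → V → ℝ} {F : Finset V} {i : V} (hF : F ∈ Δ)
    (hi : i ∈ F) : γ F i ^ 2 ≤ phi Δ γ i i := by
  have hterm : ∀ G ∈ Δ, 0 ≤ if i ∈ G ∧ i ∈ G then γ G i * γ G i else 0 := fun G _ => by
    split_ifs
    exacts [mul_self_nonneg _, le_rfl]
  simpa [phi, hi, sq] using Finset.single_le_sum hterm hF

theorem sq_restrictToFaces_le_phi_apply_self (γ : Finset V → V → ℝ) (F : Finset V) (i : V) :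
    restrictToFaces Δ γ F i ^ 2 ≤ phi Δ γ i i := by
  by_cases h : F ∈ Δ ∧ i ∈ F
  · simpa [restrictToFaces, h] using sq_le_phi_apply_self Δ h.1 h.2
  · simpa [restrictToFaces, h] using (posSemidef_phi Δ γ).diag_nonneg (i := i)

theorem isClosed_range_phi : IsClosed (Set.range (phi Δ)) := by
  refine isClosed_range_of_forall_nhds_subset_image_compact (continuous_phi Δ) fun S => ?_
  let c i := √(S i i + 1)
  refine ⟨{T | ∀ i, T i i < S i i + 1}, ?_, Set.univ.pi fun _ => Set.univ.pi fun i =>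
    Set.Icc (-c i) (c i), isCompact_univ_pi fun _ => isCompact_univ_pi fun _ => isCompact_Icc, ?_⟩
  · exact Filter.eventually_all.2 fun i =>
      (continuous_apply_apply i i).continuousAt.eventually_lt continuousAt_const (lt_add_one _)
  · rintro _ ⟨⟨γ, rfl⟩, hγ⟩
    refine ⟨restrictToFaces Δ γ, fun F _ i _ => abs_le.1 (Real.abs_le_sqrt ?_),
      phi_restrictToFaces Δ γ⟩
    exact (sq_restrictToFaces_le_phi_apply_self Δ γ F i).trans (hγ i).le

end

/-- the image of `φ_Δ` is a closed subset of `S⪰0^m(G(Δ))`. -/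
theorem image_closed_subset_psdCone (m : ℕ) (Δ : Finset (Finset (Fin m)))
    (hΔ : IsSimplicialComplex Δ) :
    IsClosed (phiImage Δ) ∧ phiImage Δ ⊆ psdCone (underlyingGraph Δ) := by
  refine ⟨isClosed_range_phi Δ, ?_⟩
  rintro _ ⟨γ, rfl⟩
  exact ⟨posSemidef_phi Δ γ, fun i j hij hadj =>
    phi_apply_eq_zero Δ hΔ.1 (fun h => hadj ⟨hij, h⟩) γ⟩
end

section
/- For any simplicial complex Δ on [m], the matrices lying on the extreme rays of the convex cone im(φ_Δ) are exactly the nonzero rank-one matrices belonging to S⪰0^m(F) for some face F ∈ Δ, i.e., the matrices v vᵀ where v ∈ ℝ^m is a nonzero vector whose support is a face of Δ. -/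
/-!
Every element of `im φ_Δ` is the sum over the faces `F` of rank-one matrices `u uᵀ` with
`supp u ⊆ F`, hence positive semidefinite. An extreme `S` is therefore proportional to any one
of its nonzero summands, which gives a rank-one matrix supported on a face (faces are closed under
taking subsets). Conversely, if `v vᵀ = Y + Z` with `Y, Z` positive semidefinite, then `Y` kills
`v^⊥`, so `(v ⬝ v) Y = Y v vᵀ = v vᵀ Y`; hence `(v ⬝ v)² Y = v vᵀ Y v vᵀ = (vᵀ Y v) v vᵀ`.
-/

open Matrix

/-- A nonzero element `x` of a convex cone `C` lies on an extreme ray of `C`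
if whenever `x = y + z` with `y, z ∈ C`, both `y` and `z` are nonnegative
multiples of `x` (i.e. lie on the ray spanned by `x`). -/
def OnExtremeRay {M : Type*} [AddCommMonoid M] [Module ℝ M]
    (C : Set M) (x : M) : Prop :=
  x ∈ C ∧ x ≠ 0 ∧ ∀ y ∈ C, ∀ z ∈ C, x = y + z →
    (∃ c : ℝ, 0 ≤ c ∧ y = c • x) ∧ ∃ c : ℝ, 0 ≤ c ∧ z = c • x

namespace Matrix

variable {n : Type*}

theorem exists_eq_vecMulVec_smul_of_vecMulVec_eq_smul {S : Matrix n n ℝ} {u : n → ℝ} {c : ℝ}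
    (hu : u ≠ 0) (hc : 0 ≤ c) (h : vecMulVec u u = c • S) :
    ∃ a : ℝ, a ≠ 0 ∧ S = vecMulVec (a • u) (a • u) := by
  have hc0 : c ≠ 0 := by
    rintro rfl
    exact vecMulVec_ne_zero hu hu (by rw [h, zero_smul])
  refine ⟨(√c)⁻¹, inv_ne_zero (Real.sqrt_ne_zero'.mpr (hc.lt_of_ne' hc0)), ?_⟩
  rw [smul_vecMulVec, vecMulVec_smul, smul_smul, h, smul_smul, ← mul_inv,
    Real.mul_self_sqrt hc, inv_mul_cancel₀ hc0, one_smul]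

variable [Fintype n]

theorem posSemidef_vecMulVec_self (u : n → ℝ) : (vecMulVec u u).PosSemidef := by
  simpa using posSemidef_vecMulVec_self_star u

open scoped ComplexOrder in
theorem PosSemidef.mulVec_eq_zero_of_add_mulVec_eq_zero {𝕜 : Type*} [RCLike 𝕜]
    {A B : Matrix n n 𝕜} (hA : A.PosSemidef) (hB : B.PosSemidef) {x : n → 𝕜}
    (hx : (A + B) *ᵥ x = 0) : A *ᵥ x = 0 := by
  have hsum : star x ⬝ᵥ A *ᵥ x + star x ⬝ᵥ B *ᵥ x = 0 := by
    rw [← dotProduct_add, ← add_mulVec, hx, dotProduct_zero]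
  exact (hA.dotProduct_mulVec_zero_iff x).mp
    ((add_eq_zero_iff_of_nonneg (hA.dotProduct_mulVec_nonneg x)
      (hB.dotProduct_mulVec_nonneg x)).mp hsum).1

theorem dotProduct_self_smul_eq_mul_vecMulVec {m α : Type*} [CommRing α] {M : Matrix m n α}
    {v : n → α} (hM : ∀ w, v ⬝ᵥ w = 0 → M *ᵥ w = 0) :
    (v ⬝ᵥ v) • M = M * vecMulVec v v := by
  refine ext_iff_mulVec.mpr fun w => ?_
  have hperp : v ⬝ᵥ ((v ⬝ᵥ v) • w - (v ⬝ᵥ w) • v) = 0 := by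
    simp only [dotProduct_sub, dotProduct_smul, smul_eq_mul]
    ring
  have := hM _ hperp
  rw [mulVec_sub, mulVec_smul, mulVec_smul, sub_eq_zero] at this
  rw [smul_mulVec, ← mulVec_mulVec, vecMulVec_mulVec, mulVec_smul]
  simpa using this

theorem PosSemidef.eq_smul_vecMulVec_of_add_eq {A B : Matrix n n ℝ} (hA : A.PosSemidef)
    (hB : B.PosSemidef) {v : n → ℝ} (hv : v ≠ 0) (h : A + B = vecMulVec v v) :
    ∃ c : ℝ, 0 ≤ c ∧ A = c • vecMulVec v v := by
  set Q := vecMulVec v v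
  have hvv : v ⬝ᵥ v ≠ 0 := fun h0 => hv (dotProduct_self_eq_zero.mp h0)
  have hker : ∀ w, v ⬝ᵥ w = 0 → A *ᵥ w = 0 := fun w hw =>
    hA.mulVec_eq_zero_of_add_mulVec_eq_zero hB (by simp [h, Q, vecMulVec_mulVec, hw])
  have hAQ : (v ⬝ᵥ v) • A = A * Q := dotProduct_self_smul_eq_mul_vecMulVec hker
  have hQA : (v ⬝ᵥ v) • A = Q * A := by
    have hAt : Aᵀ = A := (by simpa using hA.1 : A.IsSymm).eq
    simpa [transpose_mul, transpose_vecMulVec, hAt, Q] using congr($hAQᵀ)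
  have hQAQ : Q * A * Q = (v ⬝ᵥ A *ᵥ v) • Q := by
    rw [vecMulVec_mul, vecMulVec_mul_vecMulVec, vecMulVec_smul, ← dotProduct_mulVec]
  refine ⟨(v ⬝ᵥ A *ᵥ v) / (v ⬝ᵥ v) ^ 2,
    div_nonneg (by simpa using hA.dotProduct_mulVec_nonneg v) (sq_nonneg _), ?_⟩
  calc A = ((v ⬝ᵥ v) ^ 2)⁻¹ • ((v ⬝ᵥ v) • (v ⬝ᵥ v) • A) := by
        rw [smul_smul (v ⬝ᵥ v), ← sq, inv_smul_smul₀ (pow_ne_zero _ hvv)]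
    _ = ((v ⬝ᵥ v) ^ 2)⁻¹ • (Q * A * Q) := by
        rw [hQA, ← Matrix.mul_smul, hAQ, Matrix.mul_assoc]
    _ = _ := by rw [hQAQ, smul_smul, div_eq_inv_mul]

theorem onExtremeRay_vecMulVec_self {C : Set (Matrix n n ℝ)} (hC : ∀ S ∈ C, S.PosSemidef)
    {v : n → ℝ} (hv : v ≠ 0) (hvC : vecMulVec v v ∈ C) : OnExtremeRay C (vecMulVec v v) :=
  ⟨hvC, vecMulVec_ne_zero hv hv, fun Y hY Z hZ h =>
    ⟨(hC Y hY).eq_smul_vecMulVec_of_add_eq (hC Z hZ) hv h.symm,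
      (hC Z hZ).eq_smul_vecMulVec_of_add_eq (hC Y hY) hv (add_comm Y Z ▸ h.symm)⟩⟩

end Matrix

section Parametrization

variable {V : Type*} [Fintype V] [DecidableEq V]

theorem phi_eq_sum_vecMulVec (Δ : Finset (Finset V)) (γ : Finset V → V → ℝ) :
    phi Δ γ = ∑ F ∈ Δ,
      vecMulVec ((F : Set V).indicator (γ F)) ((F : Set V).indicator (γ F)) := by
  ext i j
  simp only [phi, of_apply, Matrix.sum_apply, vecMulVec_apply, Set.indicator_apply, Finset.mem_coe]
  refine Finset.sum_congr rfl fun F _ => ?_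
  by_cases hi : i ∈ F <;> by_cases hj : j ∈ F <;> simp [hi, hj]

theorem posSemidef_of_mem_phiImage {Δ : Finset (Finset V)} {S : Matrix V V ℝ}
    (hS : S ∈ phiImage Δ) : S.PosSemidef := by
  obtain ⟨γ, rfl⟩ := hS
  rw [phi_eq_sum_vecMulVec]
  exact posSemidef_sum _ fun F _ => posSemidef_vecMulVec_self _

theorem phi_eq_vecMulVec_add_phi_update {Δ : Finset (Finset V)} {F₀ : Finset V} (hF₀ : F₀ ∈ Δ)
    (γ : Finset V → V → ℝ) :
    phi Δ γ = vecMulVec ((F₀ : Set V).indicator (γ F₀)) ((F₀ : Set V).indicator (γ F₀)) +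
      phi Δ (Function.update γ F₀ 0) := by
  rw [phi_eq_sum_vecMulVec, phi_eq_sum_vecMulVec, ← Finset.add_sum_erase _ _ hF₀,
    ← Finset.add_sum_erase _ _ hF₀, Function.update_self, Set.indicator_zero', zero_vecMulVec,
    zero_add]
  congr 1
  exact Finset.sum_congr rfl fun F hF => by rw [Function.update_of_ne (Finset.ne_of_mem_erase hF)]

theorem vecMulVec_mem_phiImage {Δ : Finset (Finset V)} {F : Finset V} (hF : F ∈ Δ) {u : V → ℝ}
    (hu : Function.support u ⊆ F) : vecMulVec u u ∈ phiImage Δ := by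
  refine ⟨Function.update 0 F u, ?_⟩
  have hzero : Function.update (0 : Finset V → V → ℝ) F 0 = 0 := Function.update_eq_self_iff.mpr rfl
  rw [phi_eq_vecMulVec_add_phi_update hF, Function.update_self, Function.update_idem, hzero,
    Set.indicator_eq_self.mpr hu, add_eq_left]
  ext
  simp [phi]

theorem exists_indicator_ne_zero_of_phi_ne_zero {Δ : Finset (Finset V)} {γ : Finset V → V → ℝ}
    (h : phi Δ γ ≠ 0) : ∃ F ∈ Δ, (F : Set V).indicator (γ F) ≠ 0 := by
  by_contra! h'
  exact h (by rw [phi_eq_sum_vecMulVec]; exact Finset.sum_eq_zero fun F hF => by simp [h' F hF])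

end Parametrization

/-- the matrices on extreme rays of `im(φ_Δ)` are exactly the
nonzero rank-one matrices `v vᵀ` whose support is a face of `Δ`. -/
theorem onExtremeRay_iff_rank_one_face (m : ℕ) (Δ : Finset (Finset (Fin m)))
    (hΔ : IsSimplicialComplex Δ) (S : Matrix (Fin m) (Fin m) ℝ) :
    OnExtremeRay (phiImage Δ) S ↔
      ∃ v : Fin m → ℝ, v ≠ 0 ∧
        (Finset.univ.filter fun i => v i ≠ 0) ∈ Δ ∧
        S = Matrix.vecMulVec v v := by
  constructor
  · rintro ⟨⟨γ, rfl⟩, hS0, hext⟩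
    obtain ⟨F, hF, hu⟩ := exists_indicator_ne_zero_of_phi_ne_zero hS0
    obtain ⟨⟨c, hc, huc⟩, -⟩ := hext _ (vecMulVec_mem_phiImage hF Set.support_indicator_subset)
      _ ⟨_, rfl⟩ (phi_eq_vecMulVec_add_phi_update hF γ)
    obtain ⟨a, ha, hS⟩ := exists_eq_vecMulVec_smul_of_vecMulVec_eq_smul hu hc huc
    refine ⟨_, smul_ne_zero ha hu, hΔ.1 F hF _ fun i hi => ?_, hS⟩
    by_contra hiF
    simp [hiF] at hi
  · rintro ⟨v, hv, hsupp, rfl⟩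
    exact onExtremeRay_vecMulVec_self (fun _ => posSemidef_of_mem_phiImage) hv
      (vecMulVec_mem_phiImage hsupp fun i hi => by simpa using hi)
end

section
/- Let Δ be the edge complex of a graph G with vertex set [m], let Σ be a positive semidefinite m×m matrix, and let i ≠ j with {i,j} an edge of G. Then Σ lies in the image of φ_Δ if and only if Σ^{(ij)} lies in the image of φ_Δ, where Σ^{(ij)} is the symmetric matrix obtained from Σ by negating its (i,j) and (j,i) entries. -/
open Matrix

/-- `Σ^{(ij)}`: the matrix obtained from `S` by negating the `(i,j)` and
`(j,i)` entries. -/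
def negEntry {V : Type*} [DecidableEq V] (S : Matrix V V ℝ) (i j : V) :
    Matrix V V ℝ :=
  Matrix.of fun a b =>
    if (a = i ∧ b = j) ∨ (a = j ∧ b = i) then -S a b else S a b

/-!
In an edge complex no face contains `i`, `j` and a third vertex. Hence negating the
parameters `γ_{i,F}` on the faces `F ∋ j` changes the sign of exactly the `(i,j)` and
`(j,i)` entries of `φ_Δ(γ)`, so the image of `φ_Δ` is closed under the involution
`Σ ↦ Σ^{(ij)}`.
-/

namespace EdgeComplex

variable {V : Type*} [DecidableEq V]

lemma subset_pair_of_card_le_two {F : Finset V} (hF : F.card ≤ 2) {i j : V} (hij : i ≠ j)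
    (hi : i ∈ F) (hj : j ∈ F) : F ⊆ {i, j} :=
  (Finset.eq_of_subset_of_card_le (Finset.insert_subset hi (Finset.singleton_subset_iff.2 hj))
    (by rw [Finset.card_pair hij]; exact hF)).symm.subset

lemma negEntry_negEntry (S : Matrix V V ℝ) (i j : V) :
    negEntry (negEntry S i j) i j = S := by
  ext a b
  simp only [negEntry, Matrix.of_apply]
  split_ifs <;> ring

def negCoeff (i j : V) (γ : Finset V → V → ℝ) : Finset V → V → ℝ :=
  fun F a => if a = i ∧ j ∈ F then -γ F a else γ F a

lemma negCoeff_apply_of_mem {i j a : V} {F : Finset V} (γ : Finset V → V → ℝ)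
    (ha : a ∈ F) (hF : ¬(i ∈ F ∧ j ∈ F)) : negCoeff i j γ F a = γ F a := by
  unfold negCoeff
  rw [if_neg]
  rintro ⟨rfl, hj⟩
  exact hF ⟨ha, hj⟩

lemma phi_summand_negCoeff {i j : V} (hij : i ≠ j) (γ : Finset V → V → ℝ) (F : Finset V)
    (hF : i ∈ F → j ∈ F → F ⊆ {i, j}) (a b : V) :
    (if a ∈ F ∧ b ∈ F then negCoeff i j γ F a * negCoeff i j γ F b else 0) =
      if (a = i ∧ b = j) ∨ (a = j ∧ b = i) then
        -(if a ∈ F ∧ b ∈ F then γ F a * γ F b else 0)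
      else if a ∈ F ∧ b ∈ F then γ F a * γ F b else 0 := by
  by_cases hab : a ∈ F ∧ b ∈ F
  swap
  · simp only [if_neg hab]; split_ifs <;> ring
  obtain ⟨ha, hb⟩ := hab
  by_cases hijF : i ∈ F ∧ j ∈ F
  · have hsub := hF hijF.1 hijF.2
    have ha' := hsub ha
    have hb' := hsub hb
    simp only [Finset.mem_insert, Finset.mem_singleton] at ha' hb'
    rcases ha' with rfl | rfl <;> rcases hb' with rfl | rfl <;>
      simp [negCoeff, hijF, hij, hij.symm]
  · have hcond : ¬((a = i ∧ b = j) ∨ (a = j ∧ b = i)) := by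
      rintro (⟨rfl, rfl⟩ | ⟨rfl, rfl⟩) <;> tauto
    simp only [ha, hb, and_self, if_true, if_neg hcond,
      negCoeff_apply_of_mem γ ha hijF, negCoeff_apply_of_mem γ hb hijF]

variable [Fintype V]

lemma phi_negCoeff {Δ : Finset (Finset V)} {i j : V} (hij : i ≠ j)
    (hΔ : ∀ F ∈ Δ, i ∈ F → j ∈ F → F ⊆ {i, j}) (γ : Finset V → V → ℝ) :
    phi Δ (negCoeff i j γ) = negEntry (phi Δ γ) i j := by
  ext a b
  simp only [phi, negEntry, Matrix.of_apply]
  rw [Finset.sum_congr rfl fun F hF => phi_summand_negCoeff hij γ F (hΔ F hF) a b]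
  split_ifs
  · exact Finset.sum_neg_distrib _
  · rfl

lemma negEntry_mem_phiImage {Δ : Finset (Finset V)} {i j : V} (hij : i ≠ j)
    (hΔ : ∀ F ∈ Δ, i ∈ F → j ∈ F → F ⊆ {i, j}) {S : Matrix V V ℝ} (hS : S ∈ phiImage Δ) :
    negEntry S i j ∈ phiImage Δ := by
  obtain ⟨γ, rfl⟩ := hS
  exact ⟨negCoeff i j γ, phi_negCoeff hij hΔ γ⟩

lemma negEntry_mem_phiImage_iff {Δ : Finset (Finset V)} {i j : V} (hij : i ≠ j)
    (hΔ : ∀ F ∈ Δ, i ∈ F → j ∈ F → F ⊆ {i, j}) (S : Matrix V V ℝ) :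
    negEntry S i j ∈ phiImage Δ ↔ S ∈ phiImage Δ :=
  ⟨fun h => negEntry_negEntry S i j ▸ negEntry_mem_phiImage hij hΔ h,
    negEntry_mem_phiImage hij hΔ⟩

end EdgeComplex

open EdgeComplex in
theorem mem_image_iff_negEntry_mem_image_general (m : ℕ) (G : SimpleGraph (Fin m))
    (Δ : Finset (Finset (Fin m)))
    (hΔ : ∀ F : Finset (Fin m), F ∈ Δ ↔
      (F = ∅ ∨ (∃ i, F = {i}) ∨ ∃ i j, G.Adj i j ∧ F = ({i, j} : Finset (Fin m))))
    (S : Matrix (Fin m) (Fin m) ℝ)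
    (i j : Fin m) (hij : i ≠ j) :
    S ∈ phiImage Δ ↔ negEntry S i j ∈ phiImage Δ := by
  have hcard : ∀ F ∈ Δ, F.card ≤ 2 := by
    intro F hF
    rcases (hΔ F).1 hF with rfl | ⟨k, rfl⟩ | ⟨k, l, -, rfl⟩
    · simp
    · simp
    · exact Finset.card_le_two
  exact (negEntry_mem_phiImage_iff hij
    (fun F hF => subset_pair_of_card_le_two (hcard F hF) hij) S).symm

/-- for the edge complex `Δ` of a graph `G`, a positive
semidefinite matrix `Σ` lies in `im(φ_Δ)` iff `Σ^{(ij)}` does, for any edge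
`{i,j}` of `G`. -/
theorem mem_image_iff_negEntry_mem_image (m : ℕ) (G : SimpleGraph (Fin m))
    (Δ : Finset (Finset (Fin m)))
    (hΔ : ∀ F : Finset (Fin m), F ∈ Δ ↔
      (F = ∅ ∨ (∃ i, F = {i}) ∨ ∃ i j, G.Adj i j ∧ F = ({i, j} : Finset (Fin m))))
    (S : Matrix (Fin m) (Fin m) ℝ) (hpsd : S.PosSemidef)
    (i j : Fin m) (hij : i ≠ j) (hadj : G.Adj i j) :
    S ∈ phiImage Δ ↔ negEntry S i j ∈ phiImage Δ :=
  mem_image_iff_negEntry_mem_image_general m G Δ hΔ S i j hij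
end

section
/- Let m ≥ 3 and let Σ = (σ_ij) be a symmetric m×m matrix in S^m(C_m), i.e., σ_ij = 0 whenever i ≠ j and {i,j} is not an edge of the cycle C_m. Then det(Σ) = (−1)^{m+1} · 2 ∏_{i=1}^m σ_{i,i+1} + Σ_{M ∈ M(C_m)} (−1)^{|M|} ∏_{{i,j}∈M} σ_ij² ∏_{i ∈ [m]∖M} σ_ii, where the sum is over all matchings M of C_m, [m]∖M denotes the set of vertices not covered by M, and indices are read modulo m so that σ_{m,m+1} = σ_{1m}. -/
/-!
Only permutations sending every vertex to itself or to a neighbour on the cycle contribute to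
the Leibniz expansion of `det Σ`. If such a permutation sends `i ↦ i + 1` and `i + 1 ↦ i + 2`,
injectivity propagates this all around the cycle, so it is the rotation; likewise in the other
direction. Otherwise `i ↦ i + 1` forces `i + 1 ↦ i`, and the permutation is the product of the
disjoint transpositions `(i i+1)`, `i ∈ M`, of a matching `M`, with sign `(-1)^|M|` and weight
`∏_{i ∈ M} σ_{i,i+1}² ∏_{i ∉ ⋃M} σ_ii`. The two rotations both have sign `(-1)^(m+1)` and weight
`∏ σ_{i,i+1}`.
-/

open Matrix

/-- The matchings of the cycle `C_m`: sets of pairwise disjoint edges, where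
the edge indexed by `i : Fin m` is `{i, i+1}` (indices modulo `m`). -/
def cycleMatchings (m : ℕ) [NeZero m] : Finset (Finset (Fin m)) :=
  Finset.univ.filter fun M => ∀ i ∈ M, ∀ j ∈ M, i ≠ j →
    ({i, i + 1} ∩ {j, j + 1} : Finset (Fin m)) = ∅

/-- The matching-expansion term
`∑_{M ∈ M(C_m)} (−1)^{|M|} ∏_{{i,j} ∈ M} σ_ij² ∏_{i ∈ [m]∖M} σ_ii`,
where `[m] ∖ M` is the set of vertices not covered by the matching `M`. -/
noncomputable def matchingSum {m : ℕ} [NeZero m]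
    (S : Matrix (Fin m) (Fin m) ℝ) : ℝ :=
  ∑ M ∈ cycleMatchings m, (-1 : ℝ) ^ M.card *
    (∏ i ∈ M, (S i (i + 1)) ^ 2) *
    ∏ i ∈ (M.biUnion fun i => {i, i + 1})ᶜ, S i i

open Equiv Finset

theorem Matrix.det_eq_sum_filter_perm {n R : Type*} [DecidableEq n] [Fintype n] [CommRing R]
    (A : Matrix n n R) (p : Perm n → Prop) [DecidablePred p]
    (h : ∀ σ, ¬p σ → ∃ i, A (σ i) i = 0) :
    A.det = ∑ σ ∈ univ.filter p, ((Perm.sign σ : ℤ) : R) * ∏ i, A (σ i) i := by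
  rw [det_apply', sum_filter_of_ne]
  intro σ _ hσ
  by_contra hp
  obtain ⟨i, hi⟩ := h σ hp
  exact hσ (mul_eq_zero_of_right _ (prod_eq_zero (mem_univ i) hi))

theorem Equiv.Perm.prod_list_apply_eq_self {α : Type*} {l : List (Perm α)} {x : α}
    (h : ∀ g ∈ l, g x = x) : l.prod x = x := by
  induction l with
  | nil => rfl
  | cons g l ih => simp_all [Perm.mul_apply]

namespace Fin

variable {m : ℕ} [NeZero m]

theorem add_one_ne_self (hm : 2 ≤ m) (x : Fin m) : x + 1 ≠ x := by
  rw [Ne, add_eq_left]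
  simp [Fin.ext_iff, Nat.mod_eq_of_lt (show 1 < m by omega)]

theorem add_one_add_one_ne_self (hm : 3 ≤ m) (x : Fin m) : x + 1 + 1 ≠ x := by
  rw [add_assoc, Ne, add_eq_left, Fin.ext_iff]
  simp [Fin.val_add, Nat.mod_eq_of_lt (show 1 < m by omega), Nat.mod_eq_of_lt (show 2 < m by omega)]

open Fin.NatCast in
theorem forall_of_imp_add_one {P : Fin m → Prop} {i : Fin m} (hi : P i)
    (h : ∀ x, P x → P (x + 1)) (x : Fin m) : P x := by
  have hk : ∀ k : ℕ, P (i + (k : Fin m)) := by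
    intro k
    induction k with
    | zero => simpa using hi
    | succ k ih => simpa [add_assoc] using h _ ih
  simpa using hk (x - i).val

end Fin

section

variable {m : ℕ} [NeZero m]

theorem finRotate_ne_inv (hm : 3 ≤ m) : finRotate m ≠ (finRotate m)⁻¹ := by
  intro h
  apply Fin.add_one_add_one_ne_self hm 0
  calc 0 + 1 + 1 = finRotate m (finRotate m 0) := by simp only [finRotate_apply]
    _ = finRotate m ((finRotate m)⁻¹ 0) := by rw [← h]
    _ = 0 := (finRotate m).apply_symm_apply 0

theorem sign_finRotate_eq_neg_one_pow_add_one :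
    Perm.sign (finRotate m) = (-1) ^ (m + 1) := by
  have := NeZero.pos m
  rw [sign_finRotate, show m + 1 = m - 1 + 2 by omega, pow_add, Int.units_sq, mul_one]

end

section Matching

variable {m : ℕ} [NeZero m] {M : Finset (Fin m)}

-- Only meaningful for matchings, whose swaps commute, so the order of `M.toList` is irrelevant.
noncomputable def matchingPerm (M : Finset (Fin m)) : Perm (Fin m) :=
  (M.toList.map fun i => swap i (i + 1)).prod

theorem sign_matchingPerm (hm : 2 ≤ m) :
    Perm.sign (matchingPerm M) = (-1) ^ M.card := by
  rw [matchingPerm, Perm.sign_prod_list_swap, List.length_map, length_toList]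
  simp only [List.mem_map]
  rintro _ ⟨i, -, rfl⟩
  exact ⟨i, i + 1, (Fin.add_one_ne_self hm i).symm, rfl⟩

theorem disjoint_of_mem_cycleMatchings (hM : M ∈ cycleMatchings m) {i j : Fin m}
    (hi : i ∈ M) (hj : j ∈ M) (hij : i ≠ j) :
    Disjoint ({i, i + 1} : Finset (Fin m)) {j, j + 1} := by
  simp only [cycleMatchings, mem_filter, mem_univ, true_and] at hM
  exact disjoint_iff_inter_eq_empty.2 (hM i hi j hj hij)

theorem pairwise_disjoint_matchingPerm_swaps (hm : 2 ≤ m) (hM : M ∈ cycleMatchings m) :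
    (M.toList.map fun i => swap i (i + 1)).Pairwise Perm.Disjoint := by
  rw [List.pairwise_map]
  refine M.nodup_toList.imp_of_mem fun {i j} hi hj hij => Perm.disjoint_swap_swap ?_
  have hd := disjoint_of_mem_cycleMatchings hM (mem_toList.1 hi) (mem_toList.1 hj) hij
  simp only [disjoint_insert_left, disjoint_insert_right, disjoint_singleton, mem_insert,
    mem_singleton] at hd
  have := Fin.add_one_ne_self hm i
  have := Fin.add_one_ne_self hm j
  simp only [List.nodup_cons, List.mem_cons]
  tauto

theorem matchingPerm_apply_eq_swap_apply (hm : 2 ≤ m) (hM : M ∈ cycleMatchings m)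
    {i x : Fin m} (hi : i ∈ M) (hx : x = i ∨ x = i + 1) :
    matchingPerm M x = swap i (i + 1) x := by
  refine (Perm.eq_on_support_mem_disjoint (List.mem_map_of_mem (mem_toList.2 hi))
    (pairwise_disjoint_matchingPerm_swaps hm hM) x ?_).symm
  rw [Perm.support_swap (Fin.add_one_ne_self hm i).symm]
  simpa using hx

theorem matchingPerm_apply_of_mem (hm : 2 ≤ m) (hM : M ∈ cycleMatchings m) {i : Fin m}
    (hi : i ∈ M) : matchingPerm M i = i + 1 := by
  rw [matchingPerm_apply_eq_swap_apply hm hM hi (.inl rfl), swap_apply_left]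

theorem matchingPerm_apply_add_one_of_mem (hm : 2 ≤ m) (hM : M ∈ cycleMatchings m)
    {i : Fin m} (hi : i ∈ M) : matchingPerm M (i + 1) = i := by
  rw [matchingPerm_apply_eq_swap_apply hm hM hi (.inr rfl), swap_apply_right]

theorem matchingPerm_apply_of_not_mem_biUnion {x : Fin m}
    (hx : x ∉ M.biUnion fun i => {i, i + 1}) : matchingPerm M x = x := by
  refine Perm.prod_list_apply_eq_self ?_
  simp only [List.mem_map, mem_toList]
  rintro _ ⟨i, hi, rfl⟩
  simp only [mem_biUnion, mem_insert, mem_singleton, not_exists, not_and, not_or] at hx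
  exact swap_apply_of_ne_of_ne (hx i hi).1 (hx i hi).2

theorem matchingPerm_apply (hm : 2 ≤ m) (hM : M ∈ cycleMatchings m) (x : Fin m) :
    matchingPerm M x = if x ∈ M then x + 1 else if x - 1 ∈ M then x - 1 else x := by
  split_ifs with hx hx'
  · exact matchingPerm_apply_of_mem hm hM hx
  · simpa using matchingPerm_apply_add_one_of_mem hm hM hx'
  · refine matchingPerm_apply_of_not_mem_biUnion ?_
    simp only [mem_biUnion, mem_insert, mem_singleton, not_exists, not_and, not_or]
    intro i hi
    exact ⟨fun h => hx (h ▸ hi), fun h => hx' (by simpa [h] using hi)⟩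

theorem matchingPerm_apply_apply (hm : 2 ≤ m) (hM : M ∈ cycleMatchings m) (x : Fin m) :
    matchingPerm M (matchingPerm M x) = x := by
  rw [matchingPerm_apply hm hM x]
  split_ifs with hx hx'
  · exact matchingPerm_apply_add_one_of_mem hm hM hx
  · rw [matchingPerm_apply_of_mem hm hM hx', sub_add_cancel]
  · rw [matchingPerm_apply hm hM x, if_neg hx, if_neg hx']

theorem matchingPerm_inv (hm : 2 ≤ m) (hM : M ∈ cycleMatchings m) :
    (matchingPerm M)⁻¹ = matchingPerm M :=
  Perm.ext fun x => Perm.inv_eq_iff_eq.2 (matchingPerm_apply_apply hm hM x).symm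

theorem mem_iff_matchingPerm_apply_eq_add_one (hm : 3 ≤ m) (hM : M ∈ cycleMatchings m)
    (i : Fin m) : i ∈ M ↔ matchingPerm M i = i + 1 := by
  rw [matchingPerm_apply (by omega) hM]
  split_ifs with hi
  · simp [hi]
  · simpa [hi] using (Fin.add_one_add_one_ne_self hm (i - 1)).symm
  · simpa [hi] using (Fin.add_one_ne_self (by omega) i).symm

theorem matchingPerm_injOn (hm : 3 ≤ m) :
    Set.InjOn matchingPerm (cycleMatchings m : Set (Finset (Fin m))) := by
  intro M hM N hN h
  ext i
  rw [mem_iff_matchingPerm_apply_eq_add_one hm hM, mem_iff_matchingPerm_apply_eq_add_one hm hN,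
    h]

theorem matchingPerm_ne_finRotate (hm : 3 ≤ m) (hM : M ∈ cycleMatchings m) :
    matchingPerm M ≠ finRotate m := fun h =>
  finRotate_ne_inv hm (by rw [← h, matchingPerm_inv (by omega) hM])

theorem matchingPerm_ne_finRotate_inv (hm : 3 ≤ m) (hM : M ∈ cycleMatchings m) :
    matchingPerm M ≠ (finRotate m)⁻¹ := fun h =>
  matchingPerm_ne_finRotate hm hM (by rw [← matchingPerm_inv (by omega) hM, h, inv_inv])

theorem prod_matchingPerm_apply {R : Type*} [CommMonoid R] (hm : 2 ≤ m)
    (hM : M ∈ cycleMatchings m) (S : Matrix (Fin m) (Fin m) R) (hS : S.IsSymm) :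
    ∏ i, S (matchingPerm M i) i =
      (∏ i ∈ M, S i (i + 1) ^ 2) * ∏ i ∈ (M.biUnion fun i => {i, i + 1})ᶜ, S i i := by
  rw [← prod_mul_prod_compl (M.biUnion fun i => {i, i + 1}),
    prod_biUnion fun i hi j hj hij => disjoint_of_mem_cycleMatchings hM hi hj hij]
  congr 1
  · refine prod_congr rfl fun i hi => ?_
    rw [prod_pair (Fin.add_one_ne_self hm i).symm, matchingPerm_apply_of_mem hm hM hi,
      matchingPerm_apply_add_one_of_mem hm hM hi, hS.apply i (i + 1), sq]
  · exact prod_congr rfl fun x hx => by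
      rw [matchingPerm_apply_of_not_mem_biUnion (mem_compl.1 hx)]

theorem sum_sign_mul_prod_matchingPerm (hm : 2 ≤ m) (S : Matrix (Fin m) (Fin m) ℝ)
    (hS : S.IsSymm) :
    ∑ M ∈ cycleMatchings m, ((Perm.sign (matchingPerm M) : ℤ) : ℝ) *
      ∏ i, S (matchingPerm M i) i = matchingSum S := by
  refine sum_congr rfl fun M hM => ?_
  rw [prod_matchingPerm_apply hm hM S hS, sign_matchingPerm hm, mul_assoc]
  push_cast
  rfl

end Matching

section MovesByAtMostOne

variable {m : ℕ} [NeZero m] {σ : Perm (Fin m)}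

def MovesByAtMostOne (σ : Perm (Fin m)) : Prop :=
  ∀ x, σ x = x ∨ σ x = x + 1 ∨ σ x = x - 1

instance : DecidablePred (MovesByAtMostOne (m := m)) := fun σ => by
  unfold MovesByAtMostOne
  infer_instance

theorem exists_apply_eq_zero_of_not_movesByAtMostOne {R : Type*} [Zero R]
    {S : Matrix (Fin m) (Fin m) R}
    (hzero : ∀ i j : Fin m, i ≠ j → j ≠ i + 1 → i ≠ j + 1 → S i j = 0)
    (hσ : ¬MovesByAtMostOne σ) : ∃ i, S (σ i) i = 0 := by
  simp only [MovesByAtMostOne, not_forall, not_or] at hσ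
  obtain ⟨x, hfix, hup, hdown⟩ := hσ
  exact ⟨x, hzero _ _ hfix (fun h => hdown (eq_sub_of_add_eq h.symm)) hup⟩

theorem MovesByAtMostOne.inv (hσ : MovesByAtMostOne σ) : MovesByAtMostOne σ⁻¹ := by
  intro x
  have hx : σ (σ⁻¹ x) = x := σ.apply_symm_apply x
  rcases hσ (σ⁻¹ x) with h | h | h <;> rw [hx] at h
  · exact .inl h.symm
  · exact .inr (.inr (eq_sub_of_add_eq h.symm))
  · exact .inr (.inl (eq_add_of_sub_eq h.symm))

theorem MovesByAtMostOne.eq_finRotate (hm : 3 ≤ m) (hσ : MovesByAtMostOne σ) {i : Fin m}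
    (hi : σ i = i + 1) (hi' : σ (i + 1) = i + 1 + 1) : σ = finRotate m := by
  have hrun : ∀ x, σ x = x + 1 ∧ σ (x + 1) = x + 1 + 1 := by
    refine Fin.forall_of_imp_add_one (P := fun x => σ x = x + 1 ∧ σ (x + 1) = x + 1 + 1)
      ⟨hi, hi'⟩ fun x ⟨hx, hx'⟩ => ⟨hx', ?_⟩
    rcases hσ (x + 1 + 1) with h | h | h
    · exact absurd (σ.injective (h.trans hx'.symm)) (Fin.add_one_ne_self (by omega) _)
    · exact h
    · rw [add_sub_cancel_right] at h
      exact absurd (σ.injective (h.trans hx.symm)) (Fin.add_one_add_one_ne_self hm x)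
  exact Perm.ext fun x => (hrun x).1.trans (finRotate_apply x).symm

theorem MovesByAtMostOne.eq_finRotate_or (hm : 3 ≤ m) (hσ : MovesByAtMostOne σ) :
    σ = finRotate m ∨ ∀ i, σ i = i + 1 → σ (i + 1) = i := by
  refine or_iff_not_imp_right.2 fun h => ?_
  push Not at h
  obtain ⟨i, hi, hi'⟩ := h
  rcases hσ (i + 1) with h | h | h
  · exact absurd (σ.injective (h.trans hi.symm)) (Fin.add_one_ne_self (by omega) i)
  · exact hσ.eq_finRotate hm hi h
  · exact absurd (by rwa [add_sub_cancel_right] at h) hi'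

theorem MovesByAtMostOne.exists_matchingPerm_eq (hm : 3 ≤ m) (hσ : MovesByAtMostOne σ)
    (hswap : ∀ i, σ i = i + 1 ↔ σ (i + 1) = i) :
    ∃ M ∈ cycleMatchings m, matchingPerm M = σ := by
  set M := univ.filter fun i => σ i = i + 1
  have hmem : ∀ i, i ∈ M ↔ σ i = i + 1 := by simp [M]
  have hM : M ∈ cycleMatchings m := by
    have hnext : ∀ i ∈ M, i + 1 ∉ M := fun i hi hi' => by
      rw [hmem] at hi hi'
      exact Fin.add_one_add_one_ne_self hm i (hi'.symm.trans ((hswap i).1 hi))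
    simp only [cycleMatchings, mem_filter, mem_univ, true_and]
    intro i hi j hj hij
    rw [← disjoint_iff_inter_eq_empty]
    simp only [disjoint_insert_left, disjoint_insert_right, disjoint_singleton, mem_insert,
      mem_singleton]
    have := hnext i hi
    have := hnext j hj
    grind
  have hpred : ∀ x, σ (x - 1) = x ↔ σ x = x - 1 := fun x => by
    simpa using hswap (x - 1)
  refine ⟨M, hM, Perm.ext fun x => ?_⟩
  simp only [matchingPerm_apply (by omega) hM, hmem, sub_add_cancel, hpred]
  split_ifs with hup hdown
  · exact hup.symm
  · exact hdown.symm
  · exact ((hσ x).resolve_right (not_or.2 ⟨hup, hdown⟩)).symm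

theorem movesByAtMostOne_iff (hm : 3 ≤ m) :
    MovesByAtMostOne σ ↔ σ = finRotate m ∨ σ = (finRotate m)⁻¹ ∨
      ∃ M ∈ cycleMatchings m, matchingPerm M = σ := by
  constructor
  · intro hσ
    rcases hσ.eq_finRotate_or hm with h | hup
    · exact .inl h
    rcases hσ.inv.eq_finRotate_or hm with h | hdown
    · exact .inr (.inl (inv_eq_iff_eq_inv.1 h))
    refine .inr (.inr (hσ.exists_matchingPerm_eq hm fun i => ⟨hup i, fun h => ?_⟩))
    exact (Perm.inv_eq_iff_eq.1 (hdown i (Perm.inv_eq_iff_eq.2 h.symm))).symm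
  · rintro (rfl | rfl | ⟨M, hM, rfl⟩) x
    · exact .inr (.inl (finRotate_apply x))
    · exact .inr (.inr (Perm.inv_eq_iff_eq.2 (by rw [finRotate_apply, sub_add_cancel])))
    · rw [matchingPerm_apply (by omega) hM]
      split_ifs <;> simp

theorem filter_movesByAtMostOne (hm : 3 ≤ m) :
    univ.filter MovesByAtMostOne =
      insert (finRotate m) (insert (finRotate m)⁻¹ ((cycleMatchings m).image matchingPerm)) := by
  ext σ
  simp [movesByAtMostOne_iff hm, eq_comm]

end MovesByAtMostOne

/-- the determinant expansion for matrices in `S^m(C_m)`: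
`det Σ = (−1)^{m+1} · 2 ∏_i σ_{i,i+1} + ∑_{M ∈ M(C_m)} (−1)^{|M|}
∏_{{i,j} ∈ M} σ_ij² ∏_{i ∈ [m]∖M} σ_ii`. -/
theorem det_eq_cycle_term_add_matchingSum (m : ℕ) [NeZero m] (hm : 3 ≤ m)
    (S : Matrix (Fin m) (Fin m) ℝ) (hsym : S.IsSymm)
    (hzero : ∀ i j : Fin m, i ≠ j → j ≠ i + 1 → i ≠ j + 1 → S i j = 0) :
    S.det = (-1 : ℝ) ^ (m + 1) * 2 * (∏ i : Fin m, S i (i + 1))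
      + matchingSum S := by
  have hprod_rot : ∏ i, S (finRotate m i) i = ∏ i, S i (i + 1) :=
    prod_congr rfl fun i _ => by rw [finRotate_apply, hsym.apply]
  have hprod_rot_inv : ∏ i, S ((finRotate m)⁻¹ i) i = ∏ i, S i (i + 1) := by
    rw [← Equiv.prod_comp (finRotate m)]
    simp [finRotate_apply]
  rw [det_eq_sum_filter_perm S MovesByAtMostOne
      fun σ => exists_apply_eq_zero_of_not_movesByAtMostOne hzero,
    filter_movesByAtMostOne hm,
    sum_insert (by simpa [finRotate_ne_inv hm] using fun M => matchingPerm_ne_finRotate hm),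
    sum_insert (by simpa using fun M => matchingPerm_ne_finRotate_inv hm),
    sum_image (matchingPerm_injOn hm), sum_sign_mul_prod_matchingPerm (by omega) S hsym,
    Perm.sign_inv, sign_finRotate_eq_neg_one_pow_add_one, hprod_rot, hprod_rot_inv]
  push_cast
  ring
end

section
/- For m ≥ 3 and ρ ∈ ℝ, let Σ(ρ) be the symmetric m×m matrix with diagonal entries 1, entries 1/2 in positions (i,i+1) and (i+1,i) for i = 1,…,m−1, entries ρ/2 in positions (1,m) and (m,1), and all other entries 0. Then det Σ(ρ) = 2^{−m} [m+1 − (m−1)ρ](1+ρ) if m is odd, and det Σ(ρ) = 2^{−m} [m+1 + (m−1)ρ](1−ρ) if m is even. -/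
open Matrix

/-- The matrix `Σ(ρ)`: diagonal entries `1`, entries `1/2` in positions
`(i, i+1)` and `(i+1, i)` for `i = 1, …, m−1`, entries `ρ/2` in positions
`(1, m)` and `(m, 1)`, and zeros elsewhere (here written with indices
`0, …, m−1`). -/
noncomputable def cycMat (m : ℕ) (ρ : ℝ) : Matrix (Fin m) (Fin m) ℝ :=
  Matrix.of fun i j =>
    if i = j then 1
    else if i.val + 1 = j.val ∨ j.val + 1 = i.val then 1 / 2
    else if (i.val = 0 ∧ j.val = m - 1) ∨ (j.val = 0 ∧ i.val = m - 1) then ρ / 2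
    else 0

/-!
The matrix `2 Σ(ρ)` is the tridiagonal matrix `T` with `2` on the diagonal and `1` beside it,
plus `ρ` in the two corners. Expanding the determinant linearly in the first and the last row
gives `det T + ρ (c₁ + c₂) + ρ² c₃`. Here `det T = m + 1` by the three-term recurrence
`D_{k+2} = 2 D_{k+1} - D_k`; the corner cofactors `c₁ = c₂ = (-1)^(m-1)` come from triangular
minors with unit diagonal; and `c₃ = -det T_{m-2} = -(m-1)`. Hence
`det (2 Σ(ρ)) = (m + 1) + 2 (-1)^(m-1) ρ - (m - 1) ρ²`, which factors as claimed.
-/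

section Laplace

variable {R : Type*} [CommRing R] {n : ℕ}

theorem det_eq_of_row_eq_single (A : Matrix (Fin (n + 1)) (Fin (n + 1)) R)
    {i j : Fin (n + 1)} (h : A i = Pi.single j 1) :
    A.det = (-1) ^ (i + j : ℕ) * (A.submatrix i.succAbove j.succAbove).det := by
  rw [det_succ_row A i, Fintype.sum_eq_single j fun k hk => by simp [h, Pi.single_eq_of_ne hk]]
  simp [h]

theorem det_eq_of_col_eq_single (A : Matrix (Fin (n + 1)) (Fin (n + 1)) R)
    {i j : Fin (n + 1)} (h : ∀ k, A k j = (Pi.single i 1 : Fin (n + 1) → R) k) :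
    A.det = (-1) ^ (i + j : ℕ) * (A.submatrix i.succAbove j.succAbove).det := by
  rw [← det_transpose, det_eq_of_row_eq_single Aᵀ (funext h), add_comm, ← transpose_submatrix,
    det_transpose]

end Laplace

section Multilinear

variable {R m : Type*} [CommRing R] [Fintype m] [DecidableEq m]

theorem det_updateRow_self_add_smul (A : Matrix m m R) (i : m) (u : m → R) (a : R) :
    (A.updateRow i (A i + a • u)).det = A.det + a * (A.updateRow i u).det := by
  rw [det_updateRow_add, det_updateRow_smul, updateRow_eq_self]

theorem det_updateRow_self_add_smul_updateRow_self_add_smul (A : Matrix m m R) {i j : m}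
    (hij : i ≠ j) (u v : m → R) (a b : R) :
    ((A.updateRow i (A i + a • u)).updateRow j (A j + b • v)).det =
      A.det + a * (A.updateRow i u).det + b * (A.updateRow j v).det +
        a * b * ((A.updateRow i u).updateRow j v).det := by
  have h_row_j : (A.updateRow i (A i + a • u)) j = A j := updateRow_ne hij.symm
  have h_row_i : (A.updateRow j v) i = A i := updateRow_ne hij
  have h_second : ((A.updateRow i (A i + a • u)).updateRow j v).det =
      (A.updateRow j v).det + a * ((A.updateRow i u).updateRow j v).det := by
    rw [updateRow_comm _ hij, ← h_row_i, det_updateRow_self_add_smul,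
      updateRow_comm _ hij.symm]
  rw [← h_row_j, det_updateRow_self_add_smul, h_second, det_updateRow_self_add_smul]
  ring

end Multilinear

section Tridiagonal

variable (R : Type*) [CommRing R]

def tridiagMat (k : ℕ) : Matrix (Fin k) (Fin k) R :=
  of fun i j => if i = j then 2 else if (i : ℕ) + 1 = j ∨ (j : ℕ) + 1 = i then 1 else 0

variable {R}

theorem tridiagMat_apply {k : ℕ} (i j : Fin k) : tridiagMat R k i j =
    if (i : ℕ) = j then 2 else if (i : ℕ) + 1 = j ∨ (j : ℕ) + 1 = i then 1 else 0 := by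
  simp [tridiagMat, Fin.ext_iff]

theorem tridiagMat_transpose (k : ℕ) : (tridiagMat R k)ᵀ = tridiagMat R k := by
  ext i j
  simp only [transpose_apply, tridiagMat_apply]
  split_ifs <;> first | rfl | omega

theorem tridiagMat_submatrix_of_val_eq_add {k l : ℕ} {f g : Fin k → Fin l} (c : ℕ)
    (hf : ∀ i, (f i : ℕ) = i + c) (hg : ∀ i, (g i : ℕ) = i + c) :
    (tridiagMat R l).submatrix f g = tridiagMat R k := by
  ext i j
  simp only [submatrix_apply, tridiagMat_apply, hf, hg]
  split_ifs <;> first | rfl | omega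

theorem det_tridiagMat_add_two (k : ℕ) :
    (tridiagMat R (k + 2)).det = 2 * (tridiagMat R (k + 1)).det - (tridiagMat R k).det := by
  have h_minor : ((tridiagMat R (k + 2)).submatrix Fin.succ (Fin.succAbove 1)).det =
      (tridiagMat R k).det := by
    rw [det_eq_of_col_eq_single _ (i := 0) (j := 0) fun r => ?_]
    · rw [submatrix_submatrix, tridiagMat_submatrix_of_val_eq_add 2 (by simp) fun i => ?_]
      · simp
      · simp [Fin.one_succAbove_succ]
    · rcases Fin.eq_zero_or_eq_succ r with rfl | ⟨r, rfl⟩ <;> simp [tridiagMat_apply]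
  rw [det_succ_row_zero, Fin.sum_univ_succ, Fin.sum_univ_succ]
  simp [tridiagMat_apply, h_minor, tridiagMat_submatrix_of_val_eq_add 1 Fin.val_succ Fin.val_succ,
    sub_eq_add_neg]

theorem det_tridiagMat : ∀ k, (tridiagMat R k).det = k + 1
  | 0 => by simp
  | 1 => by norm_num [det_fin_one, tridiagMat_apply]
  | k + 2 => by
    rw [det_tridiagMat_add_two, det_tridiagMat (k + 1), det_tridiagMat k]
    push_cast
    ring

theorem det_tridiagMat_submatrix_succ_castSucc (k : ℕ) :
    ((tridiagMat R (k + 1)).submatrix Fin.succ Fin.castSucc).det = 1 := by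
  rw [det_of_isUpperTriangular fun i j (hij : j < i) => ?_]
  · simp [tridiagMat_apply]
  · simp only [submatrix_apply, tridiagMat_apply, Fin.val_succ, Fin.val_castSucc]
    split_ifs <;> first | rfl | omega

theorem det_tridiagMat_updateRow_zero (k : ℕ) :
    ((tridiagMat R (k + 1)).updateRow 0 (Pi.single (Fin.last k) 1)).det = (-1) ^ k := by
  rw [det_eq_of_row_eq_single _ (updateRow_self ..), submatrix_updateRow_succAbove,
    Fin.succAbove_zero, Fin.succAbove_last, det_tridiagMat_submatrix_succ_castSucc]
  simp

theorem det_tridiagMat_updateRow_last (k : ℕ) :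
    ((tridiagMat R (k + 1)).updateRow (Fin.last k) (Pi.single 0 1)).det = (-1) ^ k := by
  rw [det_eq_of_row_eq_single _ (updateRow_self ..), submatrix_updateRow_succAbove,
    Fin.succAbove_zero, Fin.succAbove_last, ← tridiagMat_transpose, ← transpose_submatrix,
    det_transpose, det_tridiagMat_submatrix_succ_castSucc]
  simp

theorem det_tridiagMat_updateRow_zero_updateRow_last (k : ℕ) :
    (((tridiagMat R (k + 2)).updateRow 0 (Pi.single (Fin.last (k + 1)) 1)).updateRow
      (Fin.last (k + 1)) (Pi.single 0 1)).det = -(k + 1) := by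
  set M := (tridiagMat R (k + 2)).updateRow 0 (Pi.single (Fin.last (k + 1)) 1)
  have h_row : (M.submatrix Fin.castSucc Fin.succ) 0 = Pi.single (Fin.last k) 1 := by
    ext j
    simp [M, Pi.single_apply, ← Fin.succ_last]
  have h_minor : (M.submatrix Fin.castSucc Fin.succ).submatrix Fin.succ Fin.castSucc =
      tridiagMat R k := by
    ext i j
    simp [M, updateRow_apply, tridiagMat_apply, Fin.ext_iff]
  rw [det_eq_of_row_eq_single _ (updateRow_self ..), submatrix_updateRow_succAbove,
    Fin.succAbove_zero, Fin.succAbove_last, det_eq_of_row_eq_single _ h_row,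
    Fin.succAbove_zero, Fin.succAbove_last, h_minor, det_tridiagMat]
  simp only [Fin.val_zero, Fin.val_last, add_zero, zero_add, ← mul_assoc, ← pow_add,
    Odd.neg_one_pow (⟨k, by ring⟩ : Odd (k + 1 + k)), neg_one_mul]

end Tridiagonal

theorem two_smul_cycMat (n : ℕ) (ρ : ℝ) :
    (2 : ℝ) • cycMat (n + 3) ρ =
      ((tridiagMat ℝ (n + 3)).updateRow 0
          (tridiagMat ℝ (n + 3) 0 + ρ • Pi.single (Fin.last (n + 2)) 1)).updateRow
        (Fin.last (n + 2)) (tridiagMat ℝ (n + 3) (Fin.last (n + 2)) + ρ • Pi.single 0 1) := by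
  ext i j
  simp only [Matrix.smul_apply, cycMat, of_apply, updateRow_apply, tridiagMat_apply, Pi.add_apply,
    Pi.smul_apply, Pi.single_apply, Fin.ext_iff, Fin.val_zero, Fin.val_last, smul_eq_mul,
    show n + 3 - 1 = n + 2 from rfl, zero_add]
  grind

theorem det_two_smul_cycMat (n : ℕ) (ρ : ℝ) :
    ((2 : ℝ) • cycMat (n + 3) ρ).det = n + 4 + 2 * (-1) ^ n * ρ - (n + 2) * ρ ^ 2 := by
  rw [two_smul_cycMat, det_updateRow_self_add_smul_updateRow_self_add_smul _
      (Fin.ext_iff.not.mpr (by simp)), det_tridiagMat, det_tridiagMat_updateRow_zero,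
    det_tridiagMat_updateRow_last, det_tridiagMat_updateRow_zero_updateRow_last]
  push_cast
  ring

/-- `det Σ(ρ) = 2^{−m} [m+1 − (m−1)ρ](1+ρ)` if `m` is odd, and
`det Σ(ρ) = 2^{−m} [m+1 + (m−1)ρ](1−ρ)` if `m` is even. -/
theorem det_cycMat (m : ℕ) (hm : 3 ≤ m) (ρ : ℝ) :
    (Odd m → (cycMat m ρ).det =
      (1 / 2 ^ m) * (((m : ℝ) + 1) - ((m : ℝ) - 1) * ρ) * (1 + ρ)) ∧
    (Even m → (cycMat m ρ).det =
      (1 / 2 ^ m) * (((m : ℝ) + 1) + ((m : ℝ) - 1) * ρ) * (1 - ρ)) := by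
  obtain ⟨n, rfl⟩ : ∃ n, m = n + 3 := ⟨m - 3, by omega⟩
  have h_det : (cycMat (n + 3) ρ).det =
      1 / 2 ^ (n + 3) * (n + 4 + 2 * (-1) ^ n * ρ - (n + 2) * ρ ^ 2) := by
    rw [← det_two_smul_cycMat, det_smul, Fintype.card_fin, ← mul_assoc]
    field_simp
  refine ⟨fun h_odd => ?_, fun h_even => ?_⟩
  · have h_n : Even n := by simpa [Nat.odd_add, parity_simps] using h_odd
    rw [h_det, h_n.neg_one_pow]
    push_cast
    ring
  · have h_n : Odd n := by simpa [Nat.even_add, parity_simps] using h_even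
    rw [h_det, h_n.neg_one_pow]
    push_cast
    ring
end

section
/- For every m ≥ 3, there exists a positive semidefinite matrix Σ ∈ S⪰0^m(C_m) that does not lie in the image of φ_{C_m}; hence φ_{C_m} is not surjective onto S⪰0^m(C_m). -/
open Matrix

/-- The edge complex of the cycle `C_m`, with faces the empty set, the
singletons, and the edges `{i, i+1}` (indices modulo `m`). -/
def cycleComplex (m : ℕ) [NeZero m] : Finset (Finset (Fin m)) :=
  {∅} ∪ Finset.univ.image (fun i : Fin m => ({i} : Finset (Fin m))) ∪
    Finset.univ.image (fun i : Fin m => ({i, i + 1} : Finset (Fin m)))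

/-- The cone `S⪰0^m(C_m)` of positive semidefinite matrices with zeros at the
non-edges of the cycle `C_m`. -/
def cyclePSDCone (m : ℕ) [NeZero m] : Set (Matrix (Fin m) (Fin m) ℝ) :=
  {S | S.PosSemidef ∧
    ∀ i j : Fin m, i ≠ j → j ≠ i + 1 → i ≠ j + 1 → S i j = 0}

/-!
Every matrix `φ_Δ(γ) = ∑_F γ_F γ_Fᵀ` is a sum of rank-one matrices supported on faces, so its
entrywise pairing with any `Y` whose restriction to each face is positive semidefinite is
nonnegative. For the cycle, take the weights `t = (1, m, …, m)` and let `Y` be `t tᵀ` with the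
signs of its `(0,1)` and `(1,0)` entries flipped: on the face `{0,1}` its quadratic form is
`(x₀ - m x₁)²`, on every other face `(t ⬝ x)²`. The witness is the Gram matrix
`Σ = ∑_k v_k v_kᵀ` of the fan vectors `v_k = e₀ + e_k - e_{k+1}` (`k ≠ 0, -1`), which triangulate
the cycle from the hub `0`: the hub entries on the chords `{0, j}` cancel telescopically, so `Σ`
has the zero pattern of `C_m`. Since `t ⬝ v_k = 1` and `Σ₀₁ = 1`, the pairing of `Y` with `Σ` is
`(m - 2) - 4m < 0`.
-/

open Finset

def IsFacewisePSD {V : Type*} (Δ : Finset (Finset V)) (Y : Matrix V V ℝ) : Prop :=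
  ∀ F ∈ Δ, ∀ x : V → ℝ, 0 ≤ ∑ i ∈ F, ∑ j ∈ F, x i * Y i j * x j

section Facewise

variable {V : Type*} [Fintype V] [DecidableEq V]

theorem sum_mul_phi_eq (Δ : Finset (Finset V)) (Y : Matrix V V ℝ) (γ : Finset V → V → ℝ) :
    ∑ i, ∑ j, Y i j * phi Δ γ i j = ∑ F ∈ Δ, ∑ i ∈ F, ∑ j ∈ F, γ F i * Y i j * γ F j := by
  simp only [phi, of_apply, mul_sum, ite_and, mul_ite, mul_zero]
  conv_lhs => enter [2, i]; rw [sum_comm]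
  rw [sum_comm]
  refine sum_congr rfl fun F _ => ?_
  simp only [sum_ite_irrel, sum_const_zero, Fintype.sum_ite_mem]
  exact sum_congr rfl fun i _ => sum_congr rfl fun j _ => by ring

theorem IsFacewisePSD.sum_mul_phi_nonneg {Δ : Finset (Finset V)} {Y : Matrix V V ℝ}
    (hY : IsFacewisePSD Δ Y) (γ : Finset V → V → ℝ) :
    0 ≤ ∑ i, ∑ j, Y i j * phi Δ γ i j := by
  rw [sum_mul_phi_eq]
  exact sum_nonneg fun F hF => hY F hF (γ F)

theorem IsFacewisePSD.notMem_phiImage {Δ : Finset (Finset V)} {Y : Matrix V V ℝ}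
    (hY : IsFacewisePSD Δ Y) {S : Matrix V V ℝ} (hS : ∑ i, ∑ j, Y i j * S i j < 0) :
    S ∉ phiImage Δ := by
  rintro ⟨γ, rfl⟩
  exact (hY.sum_mul_phi_nonneg γ).not_gt hS

end Facewise

section Pairing

variable {V : Type*}

theorem sum_sum_mul_vecMulVec_mul (F : Finset V) (t x : V → ℝ) :
    ∑ a ∈ F, ∑ b ∈ F, x a * vecMulVec t t a b * x b = (∑ a ∈ F, t a * x a) ^ 2 := by
  rw [sq, sum_mul_sum]
  exact sum_congr rfl fun a _ => sum_congr rfl fun b _ => by rw [vecMulVec_apply]; ring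

theorem sum_sum_mul_single_mul [DecidableEq V] (F : Finset V) (x : V → ℝ) (i j : V) :
    ∑ a ∈ F, ∑ b ∈ F, x a * single i j (1 : ℝ) a b * x b
      = if i ∈ F ∧ j ∈ F then x i * x j else 0 := by
  simp [single_apply, ite_and]

variable [Fintype V]

theorem sum_sum_vecMulVec_mul_vecMulVec (t w : V → ℝ) :
    ∑ i, ∑ j, vecMulVec t t i j * vecMulVec w w i j = (t ⬝ᵥ w) ^ 2 := by
  rw [dotProduct, ← sum_sum_mul_vecMulVec_mul]
  exact sum_congr rfl fun i _ => sum_congr rfl fun j _ => by simp only [vecMulVec_apply]; ring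

theorem sum_sum_single_mul [DecidableEq V] (a b : V) (c : ℝ) (S : Matrix V V ℝ) :
    ∑ i, ∑ j, single a b c i j * S i j = c * S a b := by
  simp [single_apply, ite_and]

end Pairing

section CycleComplex

variable {m : ℕ} [NeZero m]

theorem Fin.one_ne_zero_of_two_le (hm : 2 ≤ m) : (1 : Fin m) ≠ 0 :=
  fun h => by have := Fin.one_eq_zero_iff.mp h; omega

theorem Fin.one_ne_neg_one_of_three_le (hm : 3 ≤ m) : (1 : Fin m) ≠ -1 := by
  rw [Ne, eq_neg_iff_add_eq_zero, Fin.ext_iff, Fin.val_add, Fin.val_one', Fin.val_zero,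
    Nat.mod_eq_of_lt (by omega : 1 < m), Nat.mod_eq_of_lt (by omega : 1 + 1 < m)]
  omega

theorem Fin.sum_compl_sub_add_one {M : Type*} [AddCommGroup M] (h : (0 : Fin m) ≠ -1)
    (f : Fin m → M) :
    ∑ k ∈ ({0, -1}ᶜ : Finset (Fin m)), (f k - f (k + 1)) = f 1 - f (-1) := by
  have hall : ∑ k, (f k - f (k + 1)) = 0 := by
    rw [sum_sub_distrib, Fintype.sum_equiv (Equiv.addRight 1) (fun k => f (k + 1)) f fun _ => rfl,
      sub_self]
  rw [← sum_compl_add_sum {0, -1}, sum_pair h, zero_add, neg_add_cancel,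
    add_eq_zero_iff_eq_neg] at hall
  rw [hall]
  abel

theorem card_le_two_of_mem_cycleComplex {F : Finset (Fin m)} (hF : F ∈ cycleComplex m) :
    #F ≤ 2 := by
  simp only [cycleComplex, mem_union, mem_singleton, mem_image, mem_univ, true_and] at hF
  rcases hF with (rfl | ⟨i, rfl⟩) | ⟨i, rfl⟩
  · simp
  · simp
  · exact card_le_two

end CycleComplex

section FanWitness

variable {m : ℕ} [NeZero m]

def fanIndices (m : ℕ) [NeZero m] : Finset (Fin m) := {0, -1}ᶜ

def fanVector (k : Fin m) : Fin m → ℝ := Pi.single 0 1 + (Pi.single k 1 - Pi.single (k + 1) 1)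

def fanGram (m : ℕ) [NeZero m] : Matrix (Fin m) (Fin m) ℝ :=
  ∑ k ∈ fanIndices m, vecMulVec (fanVector k) (fanVector k)

theorem mem_fanIndices {k : Fin m} : k ∈ fanIndices m ↔ k ≠ 0 ∧ k + 1 ≠ 0 := by
  simp [fanIndices, ← eq_neg_iff_add_eq_zero]

theorem fanGram_posSemidef : (fanGram m).PosSemidef :=
  posSemidef_sum _ fun k _ => by simpa using posSemidef_vecMulVec_self_star (fanVector k)

theorem fanGram_symm (i j : Fin m) : fanGram m j i = fanGram m i j := by
  rw [← fanGram_posSemidef.isHermitian.apply, star_trivial]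

theorem fanGram_apply (i j : Fin m) :
    fanGram m i j = ∑ k ∈ fanIndices m, fanVector k i * fanVector k j := by
  simp [fanGram, Matrix.sum_apply, vecMulVec_apply]

theorem fanVector_apply_zero {k : Fin m} (hk : k ∈ fanIndices m) : fanVector k 0 = 1 := by
  rw [mem_fanIndices] at hk
  simp [fanVector, hk.1.symm, hk.2.symm]

theorem sum_fanVector (hm : 2 ≤ m) :
    ∑ k ∈ fanIndices m, fanVector k
      = (#(fanIndices m) : ℝ) • Pi.single 0 1 + (Pi.single 1 1 - Pi.single (-1) 1) := by
  have h0 : (0 : Fin m) ≠ -1 := (neg_ne_zero.mpr (Fin.one_ne_zero_of_two_le hm)).symm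
  simp only [fanVector, sum_add_distrib, sum_const, fanIndices, Nat.cast_smul_eq_nsmul,
    Fin.sum_compl_sub_add_one h0 fun k => (Pi.single k 1 : Fin m → ℝ)]

theorem fanGram_zero_apply (hm : 2 ≤ m) (j : Fin m) :
    fanGram m 0 j
      = ((#(fanIndices m) : ℝ) • Pi.single 0 1 + (Pi.single 1 1 - Pi.single (-1) 1) :
          Fin m → ℝ) j := by
  rw [fanGram_apply, ← sum_fanVector hm, Finset.sum_apply]
  exact sum_congr rfl fun k hk => by rw [fanVector_apply_zero hk, one_mul]

theorem fanGram_zero_apply_eq_zero (hm : 2 ≤ m) {j : Fin m} (h0 : j ≠ 0) (h1 : j ≠ 1)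
    (h2 : j + 1 ≠ 0) : fanGram m 0 j = 0 := by
  rw [Ne, ← eq_neg_iff_add_eq_zero] at h2
  simp [fanGram_zero_apply hm, h0, h1, h2]

theorem fanGram_zero_one (hm : 3 ≤ m) : fanGram m 0 1 = 1 := by
  have hm2 : 2 ≤ m := by omega
  simp [fanGram_zero_apply hm2, Fin.one_ne_zero_of_two_le hm2, Fin.one_ne_neg_one_of_three_le hm]

theorem fanGram_apply_eq_zero {i j : Fin m} (hi : i ≠ 0) (hj : j ≠ 0) (hij : i ≠ j)
    (hji : j ≠ i + 1) (hij' : i ≠ j + 1) : fanGram m i j = 0 := by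
  rw [fanGram_apply]
  refine sum_eq_zero fun k _ => ?_
  simp only [fanVector, Pi.add_apply, Pi.sub_apply, Pi.single_apply, hi, hj, if_false, zero_add]
  split_ifs <;> simp_all

theorem fanGram_mem_cyclePSDCone (hm : 2 ≤ m) : fanGram m ∈ cyclePSDCone m := by
  refine ⟨fanGram_posSemidef, fun i j hij hji hij' => ?_⟩
  rcases eq_or_ne i 0 with rfl | hi
  · exact fanGram_zero_apply_eq_zero hm hij.symm (by simpa using hji) hij'.symm
  rcases eq_or_ne j 0 with rfl | hj
  · rw [fanGram_symm]
    exact fanGram_zero_apply_eq_zero hm hi (by simpa using hij') hji.symm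
  exact fanGram_apply_eq_zero hi hj hij hji hij'

def hubWeight (m : ℕ) [NeZero m] (i : Fin m) : ℝ := if i = 0 then 1 else m

def cycleCertificate (m : ℕ) [NeZero m] : Matrix (Fin m) (Fin m) ℝ :=
  vecMulVec (hubWeight m) (hubWeight m) - (2 * m : ℝ) • (single 0 1 1 + single 1 0 1)

theorem isFacewisePSD_cycleCertificate (hm : 2 ≤ m) :
    IsFacewisePSD (cycleComplex m) (cycleCertificate m) := by
  intro F hF x
  have h10 := Fin.one_ne_zero_of_two_le hm
  have hentry : ∀ a b, x a * cycleCertificate m a b * x b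
      = x a * vecMulVec (hubWeight m) (hubWeight m) a b * x b
        - 2 * m * (x a * single 0 1 1 a b * x b + x a * single 1 0 1 a b * x b) := by
    intro a b
    simp only [cycleCertificate, Matrix.sub_apply, Matrix.smul_apply, Matrix.add_apply,
      smul_eq_mul]
    ring
  simp only [hentry, sum_sub_distrib, ← mul_sum, sum_add_distrib, sum_sum_mul_vecMulVec_mul,
    sum_sum_mul_single_mul]
  by_cases h01 : 0 ∈ F ∧ 1 ∈ F
  · obtain rfl : F = {0, 1} :=
      (eq_of_subset_of_card_le (insert_subset h01.1 (singleton_subset_iff.2 h01.2))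
        ((card_le_two_of_mem_cycleComplex hF).trans (card_pair h10.symm).ge)).symm
    simp [sum_pair h10.symm, hubWeight, h10]
    nlinarith [sq_nonneg (x 0 - m * x 1)]
  · rw [if_neg h01, if_neg (by tauto)]
    simpa using sq_nonneg _

theorem dotProduct_hubWeight_fanVector {k : Fin m} (hk : k ∈ fanIndices m) :
    hubWeight m ⬝ᵥ fanVector k = 1 := by
  rw [mem_fanIndices] at hk
  simp [fanVector, dotProduct_add, dotProduct_sub, dotProduct_single, hubWeight, hk.1, hk.2]

theorem sum_mul_fanGram (hm : 3 ≤ m) :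
    ∑ i, ∑ j, cycleCertificate m i j * fanGram m i j = #(fanIndices m) - 4 * m := by
  have hweight : ∑ i, ∑ j, vecMulVec (hubWeight m) (hubWeight m) i j * fanGram m i j
      = #(fanIndices m) := by
    calc _ = ∑ k ∈ fanIndices m, ∑ i, ∑ j, vecMulVec (hubWeight m) (hubWeight m) i j
              * vecMulVec (fanVector k) (fanVector k) i j := by
          simp only [fanGram, Matrix.sum_apply, mul_sum]
          conv_rhs => rw [sum_comm]; enter [2, i]; rw [sum_comm]
      _ = #(fanIndices m) := by
          simp only [sum_sum_vecMulVec_mul_vecMulVec]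
          rw [sum_congr rfl fun k hk => by rw [dotProduct_hubWeight_fanVector hk]]
          simp
  simp only [cycleCertificate, Matrix.sub_apply, Matrix.smul_apply, Matrix.add_apply, smul_eq_mul,
    sub_mul, add_mul, mul_assoc, sum_sub_distrib, ← mul_sum, sum_add_distrib, hweight,
    sum_sum_single_mul, fanGram_symm 0 1, fanGram_zero_one hm]
  ring

end FanWitness

/-- for every `m ≥ 3` there is a positive semidefinite matrix in
`S⪰0^m(C_m)` that is not in the image of `φ_{C_m}`; hence `φ_{C_m}` is not
surjective onto `S⪰0^m(C_m)`. -/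
theorem exists_psd_not_in_image_cycle (m : ℕ) [NeZero m] (hm : 3 ≤ m) :
    ∃ S ∈ cyclePSDCone m, S ∉ phiImage (cycleComplex m) := by
  refine ⟨fanGram m, fanGram_mem_cyclePSDCone (by omega),
    (isFacewisePSD_cycleCertificate (by omega)).notMem_phiImage ?_⟩
  have hcard : (#(fanIndices m) : ℝ) ≤ m := by
    exact_mod_cast (card_le_univ _).trans_eq (Fintype.card_fin m)
  have hm' : (3 : ℝ) ≤ m := by exact_mod_cast hm
  rw [sum_mul_fanGram hm]
  linarith
end
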